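/- arXiv:1307.7441 — 3 statements merged into one kernel-verified Lean document; each statement's English description precedes it below -/
import Mathlib

section
/- Let β be a Bundle Event Structure, C a configuration of β with precedence partial order ⪯_C, and let e, e' ∈ C with e ⪯_C e' and e ≠ e'. Then in every trace σ of β whose underlying event set is C, the event e occurs strictly before e'. (Every linearization of the lposet respecting precedence is consistent with all traces over that configuration.) -/
/-- Enabled events of a Bundle Event Structure after the sequence `σ`. -/
def ben {E : Type*} (conf : E → E → Prop) (bund : Set E → E → Prop) (σ : List E) : Set E :=
  {e | e ∉ σ ∧ (∀ X, bund X e → ∃ x ∈ X, x ∈ σ) ∧ ¬ ∃ e' ∈ σ, conf e e'}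

/-- `σ` is a trace w.r.t. the enabling function `en`. -/
def IsTrace {E : Type*} (en : List E → Set E) (σ : List E) : Prop :=
  ∀ i : Fin σ.length, σ.get i ∈ en (σ.take i)

/-- The priority condition on a sequence `σ`. -/
def PrioOK {E : Type*} (en : List E → Set E) (prio : E → E → Prop) (σ : List E) : Prop :=
  ∀ i, i < σ.length → ∀ j h : Fin σ.length,
    σ.get j ≠ σ.get h → σ.get j ∈ en (σ.take i) → σ.get h ∈ en (σ.take i) →
    prio (σ.get h) (σ.get j) → (j : ℕ) < h

/-- Precedence relation of a BES on a configuration `C`: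
`e` precedes `e'` if `e` belongs to a bundle set enabling `e'` (restricted to `C`). -/
def precC {E : Type*} (bund : Set E → E → Prop) (C : Set E) (a b : E) : Prop :=
  a ∈ C ∧ b ∈ C ∧ ∃ X, a ∈ X ∧ bund X b

/-- Reflexive-transitive closure of precedence on `C`. -/
def preC {E : Type*} (bund : Set E → E → Prop) (C : Set E) : E → E → Prop :=
  Relation.ReflTransGen (precC bund C)

/-! An event `b` of a trace is enabled at its own position, so some member `x` of each bundle
`X ↦ b` occurs strictly earlier. By stability every other member `a` of `X` conflicts with `x`,
and a conflict-free trace cannot contain `a` after `x`; hence any member of `X` that occurs at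
all occurs before `b`. Positions therefore increase along precedence steps, and so along `⪯_C`;
being distinct, `e` and `e'` occupy distinct positions. -/

namespace List

theorem nodup_of_getElem_notMem_take {α : Type*} {l : List α}
    (h : ∀ i (hi : i < l.length), l[i] ∉ l.take i) : l.Nodup := by
  refine pairwise_iff_getElem.2 fun i j hi hj hij heq => h j hj ?_
  exact mem_take_iff_getElem.2 ⟨i, lt_min hij hi, heq⟩

end List

namespace IsTrace

variable {E : Type*} {conf : E → E → Prop} {bund : Set E → E → Prop} {σ : List E}

theorem nodup (htr : IsTrace (ben conf bund) σ) : σ.Nodup :=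
  List.nodup_of_getElem_notMem_take fun i hi => (htr ⟨i, hi⟩).1

variable [DecidableEq E]

theorem mem_ben_take_idxOf (htr : IsTrace (ben conf bund) σ) {b : E} (hb : b ∈ σ) :
    b ∈ ben conf bund (σ.take (σ.idxOf b)) := by
  have hlen := List.idxOf_lt_length_of_mem hb
  simpa [List.getElem_idxOf hlen] using htr ⟨σ.idxOf b, hlen⟩

theorem not_conf_of_idxOf_lt (htr : IsTrace (ben conf bund) σ) {a b : E} (ha : a ∈ σ)
    (hb : b ∈ σ) (hab : σ.idxOf a < σ.idxOf b) : ¬ conf b a :=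
  fun hba => (htr.mem_ben_take_idxOf hb).2.2 ⟨a, (List.mem_take_iff_idxOf_lt ha).2 hab, hba⟩

theorem idxOf_lt_of_mem_bundle (htr : IsTrace (ben conf bund) σ)
    (hstab : ∀ X e, bund X e → ∀ e1 ∈ X, ∀ e2 ∈ X, e1 ≠ e2 → conf e1 e2)
    {X : Set E} {a b : E} (hXb : bund X b) (haX : a ∈ X) (ha : a ∈ σ) (hb : b ∈ σ) :
    σ.idxOf a < σ.idxOf b := by
  obtain ⟨x, hxX, hx⟩ := (htr.mem_ben_take_idxOf hb).2.1 X hXb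
  have hxσ : x ∈ σ := List.mem_of_mem_take hx
  have hxb : σ.idxOf x < σ.idxOf b := (List.mem_take_iff_idxOf_lt hxσ).1 hx
  by_contra! hba
  have hxa : σ.idxOf x < σ.idxOf a := hxb.trans_le hba
  have hne : a ≠ x := ne_of_apply_ne σ.idxOf hxa.ne'
  exact htr.not_conf_of_idxOf_lt hxσ ha hxa (hstab X b hXb a haX x hxX hne)

theorem idxOf_le_of_preC (htr : IsTrace (ben conf bund) σ)
    (hstab : ∀ X e, bund X e → ∀ e1 ∈ X, ∀ e2 ∈ X, e1 ≠ e2 → conf e1 e2)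
    {C : Set E} (hC : C ⊆ {x | x ∈ σ}) {a b : E} (hab : preC bund C a b) :
    σ.idxOf a ≤ σ.idxOf b := by
  induction hab with
  | refl => exact le_rfl
  | tail _ hcd ih =>
    obtain ⟨hc, hd, X, hcX, hXd⟩ := hcd
    exact ih.trans (htr.idxOf_lt_of_mem_bundle hstab hXd hcX (hC hc) (hC hd)).le

end IsTrace

theorem bes_precedence_respected_by_traces_general {E : Type*} (conf : E → E → Prop)
    (bund : Set E → E → Prop)
    (hstab : ∀ X e, bund X e → ∀ e1 ∈ X, ∀ e2 ∈ X, e1 ≠ e2 → conf e1 e2)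
    (C : Set E)
    (e e' : E) (hpre : preC bund C e e') (hne : e ≠ e')
    (σ : List E) (htr : IsTrace (ben conf bund) σ) (hset : {x | x ∈ σ} = C) :
    ∀ j h : Fin σ.length, σ.get j = e → σ.get h = e' → (j : ℕ) < h := by
  classical
  rintro j h rfl rfl
  have hle := htr.idxOf_le_of_preC hstab hset.ge hpre
  simp only [List.get_eq_getElem, htr.nodup.idxOf_getElem] at hle
  exact hle.lt_of_ne fun hjh => hne (congrArg σ.get (Fin.ext hjh))

/-- in every trace over a configuration `C`, precedence-ordered distinct
events occur in the precedence order. -/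
theorem bes_precedence_respected_by_traces {E : Type*} (conf : E → E → Prop)
    (bund : Set E → E → Prop)
    (hirr : ∀ e, ¬ conf e e) (hsym : ∀ e e', conf e e' → conf e' e)
    (hstab : ∀ X e, bund X e → ∀ e1 ∈ X, ∀ e2 ∈ X, e1 ≠ e2 → conf e1 e2)
    (C : Set E) (hC : ∃ σ : List E, IsTrace (ben conf bund) σ ∧ {e | e ∈ σ} = C)
    (e e' : E) (he : e ∈ C) (he' : e' ∈ C) (hpre : preC bund C e e') (hne : e ≠ e')
    (σ : List E) (htr : IsTrace (ben conf bund) σ) (hset : {x | x ∈ σ} = C) :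
    ∀ j h : Fin σ.length, σ.get j = e → σ.get h = e' → (j : ℕ) < h :=
  bes_precedence_respected_by_traces_general conf bund hstab C e e' hpre hne σ htr hset
end

section
/- Let (ε, ◁) be a prioritized Extended Bundle Event Structure and define ◁' = ◁ ∖ { (e,e') | e' ⇝ e ∨ ∃X ⊆ E, (e ∈ X ∧ X ↦ e') ∨ (e' ∈ X ∧ X ↦ e) }. Then the traces of (ε, ◁) equal the traces of (ε, ◁'). (Priority pairs where the higher-priority event disables the lower one, or where the events are directly related by the bundle enabling relation, are redundant.) -/
/-- Enabled events of an Extended Bundle Event Structure after the sequence `σ`. -/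
def een {E : Type*} (dis : E → E → Prop) (bund : Set E → E → Prop) (σ : List E) : Set E :=
  {e | e ∉ σ ∧ (∀ X, bund X e → ∃ x ∈ X, x ∈ σ) ∧ ¬ ∃ e' ∈ σ, dis e e'}

/-! Removing priority pairs only weakens the priority condition. Conversely a removed pair never
matters: if `e' ⇝ e` then `e'` precedes `e` in every trace anyway, and two events directly
related by a bundle are never enabled at the same time, so the priority condition says nothing
about them. -/

theorem PrioOK.mono {E : Type*} {en : List E → Set E} {prio prio' : E → E → Prop}
    {σ : List E} (hle : ∀ e e', prio' e e' → prio e e') (hp : PrioOK en prio σ) :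
    PrioOK en prio' σ :=
  fun i hi j h hne hj hh hpr => hp i hi j h hne hj hh (hle _ _ hpr)

theorem IsTrace.lt_of_dis {E : Type*} {dis : E → E → Prop} {bund : Set E → E → Prop}
    {σ : List E} (ht : IsTrace (een dis bund) σ) {j h : Fin σ.length}
    (hd : dis (σ.get j) (σ.get h)) (hne : j ≠ h) : j < h := by
  refine lt_of_le_of_ne (not_lt.mp fun hhj => ?_) hne
  have hmem : σ.get h ∈ σ.take j := by
    have := List.getElem_mem (l := σ.take j) (n := h) (by simp [hhj])
    simpa [List.getElem_take] using this
  exact (ht j).2.2 ⟨σ.get h, hmem, hd⟩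

/-- By stability, every member of `X` other than the executed event that satisfied the bundle
`X ↦ e` is disabled by that event. -/
theorem not_mem_een_of_mem_bundle {E : Type*} {dis : E → E → Prop} {bund : Set E → E → Prop}
    (hstab : ∀ X e, bund X e → ∀ e1 ∈ X, ∀ e2 ∈ X, e1 ≠ e2 → dis e1 e2)
    {σ : List E} {X : Set E} {e e' : E} (hb : bund X e) (he' : e' ∈ X)
    (he : e ∈ een dis bund σ) : e' ∉ een dis bund σ := by
  rintro ⟨he'σ, -, hnd⟩
  obtain ⟨x, hxX, hxσ⟩ := he.2.1 X hb
  have hx : e' ≠ x := fun hex => he'σ (hex ▸ hxσ)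
  exact hnd ⟨x, hxσ, hstab X e hb e' he' x hxX hx⟩

theorem pebes_priority_reduction_general {E : Type*} (dis : E → E → Prop)
    (bund : Set E → E → Prop) (prio : E → E → Prop)
    (hstab : ∀ X e, bund X e → ∀ e1 ∈ X, ∀ e2 ∈ X, e1 ≠ e2 → dis e1 e2) :
    {σ : List E | IsTrace (een dis bund) σ ∧ PrioOK (een dis bund) prio σ} =
      {σ : List E | IsTrace (een dis bund) σ ∧
        PrioOK (een dis bund)
          (fun e e' => prio e e' ∧
            ¬ (dis e' e ∨ ∃ X : Set E, (e ∈ X ∧ bund X e') ∨ (e' ∈ X ∧ bund X e))) σ} := by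
  ext σ
  refine ⟨fun ⟨ht, hp⟩ => ⟨ht, hp.mono fun _ _ => And.left⟩, fun ⟨ht, hp⟩ => ⟨ht, ?_⟩⟩
  intro i hi j h hne hj hh hpr
  by_cases hred : dis (σ.get j) (σ.get h) ∨ ∃ X : Set E,
      (σ.get h ∈ X ∧ bund X (σ.get j)) ∨ (σ.get j ∈ X ∧ bund X (σ.get h))
  · rcases hred with hd | ⟨X, ⟨hmem, hb⟩ | ⟨hmem, hb⟩⟩
    · exact ht.lt_of_dis hd (ne_of_apply_ne σ.get hne)
    · exact absurd hh (not_mem_een_of_mem_bundle hstab hb hmem hj)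
    · exact absurd hj (not_mem_een_of_mem_bundle hstab hb hmem hh)
  · exact hp i hi j h hne hj hh ⟨hpr, hred⟩

/-- priority pairs `(e, e')` where `e' ⇝ e` or where `e` and `e'` are
directly related by the bundle enabling relation are redundant in a prioritized EBES. -/
theorem pebes_priority_reduction {E : Type*} (dis : E → E → Prop)
    (bund : Set E → E → Prop) (prio : E → E → Prop)
    (hirr : ∀ e, ¬ dis e e)
    (hstab : ∀ X e, bund X e → ∀ e1 ∈ X, ∀ e2 ∈ X, e1 ≠ e2 → dis e1 e2)
    (hacyc : ∀ e, ¬ Relation.TransGen prio e e) :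
    {σ : List E | IsTrace (een dis bund) σ ∧ PrioOK (een dis bund) prio σ} =
      {σ : List E | IsTrace (een dis bund) σ ∧
        PrioOK (een dis bund)
          (fun e e' => prio e e' ∧
            ¬ (dis e' e ∨ ∃ X : Set E, (e ∈ X ∧ bund X e') ∨ (e' ∈ X ∧ bund X e))) σ} :=
  pebes_priority_reduction_general dis bund prio hstab
end

section
/- Let (Δ, ◁) be a prioritized Dual Event Structure and define ◁' = ◁ ∖ { (e,e'), (e',e) | e # e' }. Then the traces of (Δ, ◁) equal the traces of (Δ, ◁'). (Priority pairs between conflicting events remain redundant in Dual Event Structures.) -/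
theorem PrioOK.mono_s18 {E : Type*} {en : List E → Set E} {p q : E → E → Prop} {σ : List E}
    (hpq : ∀ a ∈ σ, ∀ b ∈ σ, a ≠ b → p a b → q a b) (hq : PrioOK en q σ) :
    PrioOK en p σ :=
  fun i hi j h hne hj hh hp =>
    hq i hi j h hne hj hh (hpq _ (List.get_mem _ _) _ (List.get_mem _ _) (Ne.symm hne) hp)

namespace IsTrace

variable {E : Type*} {conf : E → E → Prop} {bund : Set E → E → Prop} {σ : List E}

theorem not_conf_of_lt (ht : IsTrace (ben conf bund) σ) {j h : Fin σ.length}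
    (hjh : (j : ℕ) < h) : ¬ conf (σ.get h) (σ.get j) := fun hc =>
  (ht h).2.2 ⟨σ.get j, List.mem_iff_getElem.2 ⟨j, by simpa using hjh, by simp⟩, hc⟩

theorem not_conf_of_mem (ht : IsTrace (ben conf bund) σ)
    (hsym : ∀ e e', conf e e' → conf e' e) {a b : E} (ha : a ∈ σ) (hb : b ∈ σ) (hab : a ≠ b) :
    ¬ conf a b := by
  obtain ⟨j, rfl⟩ := List.get_of_mem ha
  obtain ⟨h, rfl⟩ := List.get_of_mem hb
  rcases lt_trichotomy (j : ℕ) h with hjh | hjh | hhj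
  · exact fun hc => ht.not_conf_of_lt hjh (hsym _ _ hc)
  · exact absurd (congrArg σ.get (Fin.ext hjh)) hab
  · exact ht.not_conf_of_lt hhj

end IsTrace

theorem pdes_conflict_priority_redundant_general {E : Type*} (conf : E → E → Prop)
    (bund : Set E → E → Prop) (prio : E → E → Prop)
    (hsym : ∀ e e', conf e e' → conf e' e) :
    {σ : List E | IsTrace (ben conf bund) σ ∧ PrioOK (ben conf bund) prio σ} =
      {σ : List E | IsTrace (ben conf bund) σ ∧
        PrioOK (ben conf bund)
          (fun e e' => prio e e' ∧ ¬ (conf e e' ∨ conf e' e)) σ} := by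
  ext σ
  refine and_congr_right fun ht => ⟨PrioOK.mono_s18 fun _ _ _ _ _ hp => hp.1, PrioOK.mono_s18 ?_⟩
  exact fun a ha b hb hab hp =>
    ⟨hp, not_or.2 ⟨ht.not_conf_of_mem hsym ha hb hab, ht.not_conf_of_mem hsym hb ha hab.symm⟩⟩

/-- priority pairs between conflicting events remain redundant in
prioritized Dual Event Structures (no stability condition is assumed). -/
theorem pdes_conflict_priority_redundant {E : Type*} (conf : E → E → Prop)
    (bund : Set E → E → Prop) (prio : E → E → Prop)
    (hirr : ∀ e, ¬ conf e e) (hsym : ∀ e e', conf e e' → conf e' e)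
    (hacyc : ∀ e, ¬ Relation.TransGen prio e e) :
    {σ : List E | IsTrace (ben conf bund) σ ∧ PrioOK (ben conf bund) prio σ} =
      {σ : List E | IsTrace (ben conf bund) σ ∧
        PrioOK (ben conf bund)
          (fun e e' => prio e e' ∧ ¬ (conf e e' ∨ conf e' e)) σ} :=
  pdes_conflict_priority_redundant_general conf bund prio hsym
end
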